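/- Let n > 2, ζ = 2π/n, and for k ∈ {2,...,n−2,n} define T_k : ℂ² → ℂ^{2(n+1)} by T_k(w) = (0, n^{−1/2} e^{(ikI+J)ζ} w, ..., n^{−1/2} e^{n(ikI+J)ζ} w), where the exponential of the real 2×2 matrix (ikI+J)ζ acts on w ∈ ℂ². Then T_k is a linear isometry onto its image W_k, and for k ≠ k' in {2,...,n−2,n} ∪ {1, n−1} the images W_k and W_{k'} are orthogonal in ℂ^{2(n+1)} (with the standard Hermitian inner product). -/

import Mathlib

open Matrix Complex

/-- The real symplectic matrix `J`, viewed over `ℂ`. -/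
noncomputable def Jc : Matrix (Fin 2) (Fin 2) ℂ := !![0, -1; 1, 0]

/-- The 2×2 block `e^{j (ikI + J) ζ}` with `ζ = 2π/n`, acting on `ℂ²`. -/
noncomputable def Eblk (n k j : ℕ) : Matrix (Fin 2) (Fin 2) ℂ :=
  NormedSpace.exp
    ((j : ℂ) • (((2 * Real.pi / n : ℝ) : ℂ) •
      ((Complex.I * (k : ℂ)) • (1 : Matrix (Fin 2) (Fin 2) ℂ) + Jc)))

/-- `T_k : ℂ² → ℂ^{2(n+1)}` for `k ∈ {2,…,n−2, n}`:
`T_k(w) = (0, n^{-1/2} e^{(ikI+J)ζ} w, …, n^{-1/2} e^{n(ikI+J)ζ} w)`. -/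
noncomputable def Tmid (n k : ℕ) (w : EuclideanSpace ℂ (Fin 2)) :
    EuclideanSpace ℂ (Fin (n + 1) × Fin 2) :=
  (WithLp.equiv 2 (Fin (n + 1) × Fin 2 → ℂ)).symm fun p =>
    if p.1 = 0 then 0
    else ((Real.sqrt n : ℂ))⁻¹ * (Eblk n k (p.1 : ℕ)).mulVec (fun i => w i) p.2

/-- The vectors `v₁ = 2^{-1/2}(1, i)` and `v_{n-1} = 2^{-1/2}(1, -i)`. -/
noncomputable def vlow (n k : ℕ) : Fin 2 → ℂ :=
  if k = 1 then ![((Real.sqrt 2 : ℂ))⁻¹, ((Real.sqrt 2 : ℂ))⁻¹ * Complex.I]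
  else ![((Real.sqrt 2 : ℂ))⁻¹, -(((Real.sqrt 2 : ℂ))⁻¹ * Complex.I)]

/-- `T_k : ℂ³ → ℂ^{2(n+1)}` for `k ∈ {1, n−1}`:
`T_k(α, w) = (v_k α, n^{-1/2} e^{(ikI+J)ζ} w, …, n^{-1/2} e^{n(ikI+J)ζ} w)`. -/
noncomputable def Tlow (n k : ℕ) (z : EuclideanSpace ℂ (Fin 3)) :
    EuclideanSpace ℂ (Fin (n + 1) × Fin 2) :=
  (WithLp.equiv 2 (Fin (n + 1) × Fin 2 → ℂ)).symm fun p =>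
    if p.1 = 0 then vlow n k p.2 * z 0
    else ((Real.sqrt n : ℂ))⁻¹ * (Eblk n k (p.1 : ℕ)).mulVec ![z 1, z 2] p.2

/-!
Each block `e^{j(ikI+J)ζ}` factors as the phase `e^{ijkζ}` times the rotation `e^{jζJ}`, and
rotations are unitary. Hence the inner product of `T_k` and `T_{k'}` applied to vectors with
ℂ²-parts `w, w'` is the inner product of the 0-th blocks plus
`n⁻¹ (∑_{j=1}^n ω^{j(k'-k)}) ⟨w, w'⟩`, with `ω = e^{2πi/n}` a primitive `n`-th root of unity.
For `k, k' ∈ {1, …, n}` this character sum is `n` when `k = k'` and `0` otherwise, and the 0-th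
blocks are handled by the orthonormality of `v₁, v_{n-1}`.
-/

open Finset

lemma Matrix.exp_smul_one {m : Type*} [Fintype m] [DecidableEq m] (c : ℂ) :
    NormedSpace.exp (c • (1 : Matrix m m ℂ)) = cexp c • 1 := by
  rw [smul_one_eq_diagonal, Matrix.exp_diagonal, Pi.exp_def, smul_one_eq_diagonal,
    Complex.exp_eq_exp_ℂ]

lemma Jc_conjTranspose : Jcᴴ = -Jc := by
  ext i j; fin_cases i <;> fin_cases j <;> simp [Jc]

lemma conjTranspose_exp_smul_Jc_mul_self (θ : ℝ) :
    (NormedSpace.exp ((θ : ℂ) • Jc))ᴴ * NormedSpace.exp ((θ : ℂ) • Jc) = 1 := by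
  rw [← Matrix.exp_conjTranspose, conjTranspose_smul, Jc_conjTranspose, Complex.star_def,
    Complex.conj_ofReal, smul_neg,
    ← Matrix.exp_add_of_commute _ _ (Commute.neg_left (Commute.refl ((θ : ℂ) • Jc))),
    neg_add_cancel, NormedSpace.exp_zero]

lemma Eblk_eq_cexp_smul_exp (n k j : ℕ) :
    Eblk n k j = cexp (I * k * (j * (2 * Real.pi / n) : ℝ)) •
      NormedSpace.exp (((j * (2 * Real.pi / n) : ℝ) : ℂ) • Jc) := by
  have hsplit : (j : ℂ) • (((2 * Real.pi / n : ℝ) : ℂ) •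
        ((I * k) • (1 : Matrix (Fin 2) (Fin 2) ℂ) + Jc)) =
      (I * k * (j * (2 * Real.pi / n) : ℝ)) • 1 + ((j * (2 * Real.pi / n) : ℝ) : ℂ) • Jc := by
    push_cast; module
  rw [Eblk, hsplit, Matrix.exp_add_of_commute _ _ ((Commute.one_left _).smul_left _),
    Matrix.exp_smul_one, smul_one_mul]

lemma conjTranspose_Eblk_mul_Eblk (n k k' j : ℕ) :
    (Eblk n k j)ᴴ * Eblk n k' j = (cexp (2 * Real.pi * I / n) ^ ((k' : ℤ) - k)) ^ j • 1 := by
  rw [Eblk_eq_cexp_smul_exp, Eblk_eq_cexp_smul_exp, conjTranspose_smul, smul_mul_smul_comm,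
    conjTranspose_exp_smul_Jc_mul_self, Complex.star_def, ← Complex.exp_conj, ← Complex.exp_add,
    ← zpow_natCast, ← _root_.zpow_mul, ← Complex.exp_int_mul]
  congr 2
  simp only [map_mul, Complex.conj_I, Complex.conj_natCast, Complex.conj_ofReal]
  push_cast
  ring

lemma sum_range_pow_succ_eq_zero {K : Type*} [Field K] {c : K} {n : ℕ} (hc : c ^ n = 1)
    (h1 : c ≠ 1) : ∑ j ∈ range n, c ^ (j + 1) = 0 := by
  have hgeom := mul_geom_sum c n
  rw [hc, sub_self, mul_eq_zero, sub_eq_zero] at hgeom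
  simp_rw [pow_succ', ← mul_sum, hgeom.resolve_left h1, mul_zero]

lemma IsPrimitiveRoot.sum_range_zpow_pow_succ_eq_zero {K : Type*} [Field K] {ζ : K} {n : ℕ}
    (hζ : IsPrimitiveRoot ζ n) {m : ℤ} (hm : ¬ (n : ℤ) ∣ m) :
    ∑ j ∈ range n, (ζ ^ m) ^ (j + 1) = 0 := by
  refine sum_range_pow_succ_eq_zero ?_ (mt (hζ.zpow_eq_one_iff_dvd m).mp hm)
  rw [← zpow_natCast, ← _root_.zpow_mul, mul_comm, _root_.zpow_mul, zpow_natCast, hζ.pow_eq_one,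
    _root_.one_zpow]

lemma dotProduct_star_mulVec_of_conjTranspose_mul {ι : Type*} [Fintype ι] [DecidableEq ι]
    {A B : Matrix ι ι ℂ} {c : ℂ} (hAB : Aᴴ * B = c • 1) (v w : ι → ℂ) :
    B *ᵥ w ⬝ᵥ star (A *ᵥ v) = c * (w ⬝ᵥ star v) := by
  rw [dotProduct_comm, star_mulVec, dotProduct_mulVec, vecMul_vecMul, hAB, vecMul_smul,
    vecMul_one, smul_dotProduct, dotProduct_comm, smul_eq_mul]

lemma dotProduct_star_of_mul_const {ι : Type*} [Fintype ι] (u v : ι → ℂ) (a b : ℂ) :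
    (fun i => u i * a) ⬝ᵥ star (fun i => v i * b) = a * star b * (u ⬝ᵥ star v) := by
  simp only [dotProduct, Pi.star_apply, star_mul', mul_sum]
  exact sum_congr rfl fun i _ => by ring

lemma inv_sqrt_two_mul_self : ((Real.sqrt 2 : ℂ))⁻¹ * ((Real.sqrt 2 : ℂ))⁻¹ = 2⁻¹ := by
  rw [← mul_inv, ← Complex.ofReal_mul, Real.mul_self_sqrt zero_le_two, Complex.ofReal_ofNat]

lemma vlow_dotProduct_star_self (n k : ℕ) : vlow n k ⬝ᵥ star (vlow n k) = 1 := by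
  unfold vlow
  split_ifs <;>
    simp only [dotProduct, Fin.sum_univ_two, Pi.star_apply, cons_val_zero, cons_val_one,
      cons_val_fin_one, Complex.star_def, map_mul, map_neg, map_inv₀, conj_ofReal, conj_I] <;>
    linear_combination (2 : ℂ) * inv_sqrt_two_mul_self - (√2 : ℂ)⁻¹ * (√2 : ℂ)⁻¹ * I_mul_I

lemma vlow_dotProduct_star_of_ne (n k k' : ℕ) (hkk' : k = 1 ↔ k' ≠ 1) :
    vlow n k' ⬝ᵥ star (vlow n k) = 0 := by
  obtain ⟨hk, hk'⟩ | ⟨hk, hk'⟩ : (k = 1 ∧ k' ≠ 1) ∨ (k ≠ 1 ∧ k' = 1) := by tauto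
  all_goals
    simp only [vlow, hk, hk', if_true, if_false, dotProduct, Fin.sum_univ_two, Pi.star_apply,
      cons_val_zero, cons_val_one, cons_val_fin_one, map_mul, map_neg, map_inv₀,
      Complex.star_def, conj_ofReal, conj_I]
    linear_combination (√2 : ℂ)⁻¹ * (√2 : ℂ)⁻¹ * I_mul_I

noncomputable def blockVec {ι : Type*} [Fintype ι] (n : ℕ) (E : ℕ → Matrix ι ι ℂ) (h v : ι → ℂ) :
    EuclideanSpace ℂ (Fin (n + 1) × ι) :=
  (WithLp.equiv 2 (Fin (n + 1) × ι → ℂ)).symm fun p =>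
    if p.1 = 0 then h p.2 else ((Real.sqrt n : ℂ))⁻¹ * (E p.1 *ᵥ v) p.2

lemma Tmid_eq_blockVec (n k : ℕ) (w : EuclideanSpace ℂ (Fin 2)) :
    Tmid n k w = blockVec n (Eblk n k) 0 w.ofLp := rfl

lemma Tlow_eq_blockVec (n k : ℕ) (z : EuclideanSpace ℂ (Fin 3)) :
    Tlow n k z = blockVec n (Eblk n k) (fun i => vlow n k i * z 0) ![z 1, z 2] := rfl

section blockVec

variable {ι : Type*} [Fintype ι] {n : ℕ}

lemma blockVec_add (E : ℕ → Matrix ι ι ℂ) (h h' v v' : ι → ℂ) :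
    blockVec n E (h + h') (v + v') = blockVec n E h v + blockVec n E h' v' := by
  ext p; by_cases hp : p.1 = 0 <;> simp [blockVec, hp, mulVec_add, mul_add]

lemma blockVec_smul (E : ℕ → Matrix ι ι ℂ) (c : ℂ) (h v : ι → ℂ) :
    blockVec n E (c • h) (c • v) = c • blockVec n E h v := by
  ext p; by_cases hp : p.1 = 0 <;> simp [blockVec, hp, mulVec_smul, mul_left_comm]

lemma inner_blockVec [DecidableEq ι] {E E' : ℕ → Matrix ι ι ℂ} {c : ℂ}
    (hE : ∀ j, (E j)ᴴ * E' j = c ^ j • 1) (h h' v v' : ι → ℂ) :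
    inner ℂ (blockVec n E h v) (blockVec n E' h' v') =
      h' ⬝ᵥ star h + (n : ℂ)⁻¹ * (∑ j ∈ range n, c ^ (j + 1)) * (v' ⬝ᵥ star v) := by
  have hsqrt : ((Real.sqrt n : ℂ))⁻¹ * star ((Real.sqrt n : ℂ))⁻¹ = (n : ℂ)⁻¹ := by
    rw [star_inv₀, Complex.star_def, Complex.conj_ofReal, ← mul_inv, ← Complex.ofReal_mul,
      Real.mul_self_sqrt n.cast_nonneg, Complex.ofReal_natCast]
  have hblock : ∀ j : ℕ, ∑ i, ((Real.sqrt n : ℂ))⁻¹ * (E' j *ᵥ v') i *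
      star (((Real.sqrt n : ℂ))⁻¹ * (E j *ᵥ v) i) = (n : ℂ)⁻¹ * c ^ j * (v' ⬝ᵥ star v) := by
    intro j
    rw [mul_assoc, ← dotProduct_star_mulVec_of_conjTranspose_mul (hE j), dotProduct, mul_sum]
    refine sum_congr rfl fun i _ => ?_
    rw [star_mul', Pi.star_apply, ← hsqrt]
    ring
  rw [EuclideanSpace.inner_eq_star_dotProduct, dotProduct, Fintype.sum_prod_type,
    Fin.sum_univ_succ]
  simp only [blockVec, WithLp.equiv_symm_apply, PiLp.toLp_apply, Pi.star_apply, if_pos,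
    Fin.succ_ne_zero, if_false, Fin.val_succ, hblock]
  rw [Fin.sum_univ_eq_sum_range (fun j => (n : ℂ)⁻¹ * c ^ (j + 1) * (v' ⬝ᵥ star v)), ← sum_mul,
    ← mul_sum]
  rfl

end blockVec

lemma inner_blockVec_Eblk_self {n : ℕ} (hn : n ≠ 0) (k : ℕ) (h h' v v' : Fin 2 → ℂ) :
    inner ℂ (blockVec n (Eblk n k) h v) (blockVec n (Eblk n k) h' v') =
      h' ⬝ᵥ star h + v' ⬝ᵥ star v := by
  rw [inner_blockVec (conjTranspose_Eblk_mul_Eblk n k k)]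
  simp only [sub_self, zpow_zero, one_pow, sum_const, card_range, nsmul_eq_mul, mul_one]
  rw [inv_mul_cancel₀ (Nat.cast_ne_zero.2 hn), one_mul]

lemma inner_blockVec_Eblk_of_ne {n k k' : ℕ} (hk : 1 ≤ k ∧ k ≤ n) (hk' : 1 ≤ k' ∧ k' ≤ n)
    (hkk' : k ≠ k') (h h' v v' : Fin 2 → ℂ) :
    inner ℂ (blockVec n (Eblk n k) h v) (blockVec n (Eblk n k') h' v') = h' ⬝ᵥ star h := by
  have hω := Complex.isPrimitiveRoot_exp n (by omega)
  have hndvd : ¬ (n : ℤ) ∣ (k' : ℤ) - k := fun hdvd =>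
    hkk' (by have := Int.eq_zero_of_abs_lt_dvd hdvd (by rw [abs_lt]; omega); omega)
  rw [inner_blockVec (conjTranspose_Eblk_mul_Eblk n k k'),
    hω.sum_range_zpow_pow_succ_eq_zero hndvd, mul_zero, zero_mul, add_zero]

lemma Tmid_isLinearMap (n k : ℕ) : IsLinearMap ℂ (Tmid n k) := by
  refine ⟨fun w w' => ?_, fun c w => ?_⟩
  · simpa [Tmid_eq_blockVec] using blockVec_add (n := n) (Eblk n k) 0 0 w.ofLp w'.ofLp
  · simpa [Tmid_eq_blockVec] using blockVec_smul (n := n) (Eblk n k) c 0 w.ofLp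

lemma Tlow_isLinearMap (n k : ℕ) : IsLinearMap ℂ (Tlow n k) := by
  refine ⟨fun z z' => ?_, fun c z => ?_⟩
  · rw [Tlow_eq_blockVec, Tlow_eq_blockVec, Tlow_eq_blockVec, ← blockVec_add]
    congr 1 <;> ext i <;> fin_cases i <;> simp [mul_add]
  · rw [Tlow_eq_blockVec, Tlow_eq_blockVec, ← blockVec_smul]
    congr 1 <;> ext i <;> fin_cases i <;> simp [mul_left_comm]

lemma norm_eq_norm_of_inner_self_eq {𝕜 E F : Type*} [RCLike 𝕜] [NormedAddCommGroup E]
    [InnerProductSpace 𝕜 E] [NormedAddCommGroup F] [InnerProductSpace 𝕜 F] {x : E} {y : F}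
    (h : inner 𝕜 x x = inner 𝕜 y y) : ‖x‖ = ‖y‖ := by
  rw [norm_eq_sqrt_re_inner (𝕜 := 𝕜), h, ← norm_eq_sqrt_re_inner]

theorem Tk_isometry_and_orthogonal (n : ℕ) (hn : 2 < n) :
    (∀ k, ((2 ≤ k ∧ k ≤ n - 2) ∨ k = n) →
      IsLinearMap ℂ (Tmid n k) ∧ ∀ w, ‖Tmid n k w‖ = ‖w‖) ∧
    (∀ k, (k = 1 ∨ k = n - 1) →
      IsLinearMap ℂ (Tlow n k) ∧ ∀ z, ‖Tlow n k z‖ = ‖z‖) ∧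
    (∀ k k', ((2 ≤ k ∧ k ≤ n - 2) ∨ k = n) → ((2 ≤ k' ∧ k' ≤ n - 2) ∨ k' = n) →
      k ≠ k' → ∀ w w', inner ℂ (Tmid n k w) (Tmid n k' w') = (0 : ℂ)) ∧
    (∀ k k', ((2 ≤ k ∧ k ≤ n - 2) ∨ k = n) → (k' = 1 ∨ k' = n - 1) →
      ∀ w z, inner ℂ (Tmid n k w) (Tlow n k' z) = (0 : ℂ)) ∧
    (∀ k k', (k = 1 ∨ k = n - 1) → (k' = 1 ∨ k' = n - 1) → k ≠ k' →
      ∀ z z', inner ℂ (Tlow n k z) (Tlow n k' z') = (0 : ℂ)) := by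
  have hn0 : n ≠ 0 := by omega
  refine ⟨fun k _ => ⟨Tmid_isLinearMap n k, fun w => ?_⟩,
    fun k _ => ⟨Tlow_isLinearMap n k, fun z => ?_⟩, ?_, ?_, ?_⟩
  · apply norm_eq_norm_of_inner_self_eq (𝕜 := ℂ)
    rw [Tmid_eq_blockVec, inner_blockVec_Eblk_self hn0, EuclideanSpace.inner_eq_star_dotProduct,
      star_zero, dotProduct_zero, zero_add]
  · apply norm_eq_norm_of_inner_self_eq (𝕜 := ℂ)
    rw [Tlow_eq_blockVec, inner_blockVec_Eblk_self hn0, dotProduct_star_of_mul_const,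
      vlow_dotProduct_star_self, EuclideanSpace.inner_eq_star_dotProduct]
    simp [dotProduct, Fin.sum_univ_succ]
  · intro k k' hk hk' hkk' w w'
    rw [Tmid_eq_blockVec, Tmid_eq_blockVec, inner_blockVec_Eblk_of_ne (by omega) (by omega) hkk',
      star_zero, dotProduct_zero]
  · intro k k' hk hk' w z
    rw [Tmid_eq_blockVec, Tlow_eq_blockVec,
      inner_blockVec_Eblk_of_ne (by omega) (by omega) (by omega), star_zero, dotProduct_zero]
  · intro k k' hk hk' hkk' z z'
    rw [Tlow_eq_blockVec, Tlow_eq_blockVec, inner_blockVec_Eblk_of_ne (by omega) (by omega) hkk',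
      dotProduct_star_of_mul_const, vlow_dotProduct_star_of_ne n k k' (by omega), mul_zero]
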